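/- Let k > 0, let q be a nonnegative integer, and let D ⊂ ℝ² be a bounded measurable set. Then there exist constants C > 0 and R > 0 such that for every z ∈ ℝ² with dist(z, D) ≥ R, Σ_{s + t ≤ q} ∫_D |∂_{x₁}^{s} ∂_{x₂}^{t} J₀(k |x − z|)|² dx ≤ C / dist(z, D), where the sum is over all pairs of nonnegative integers (s, t) with s + t ≤ q and the derivatives are taken on ℝ² \ {z}. (This extends the H⁴ estimate to the H^q(D)-norm for any q ∈ ℕ.) -/

import Mathlib

open Complex Real MeasureTheory
open scoped RealInnerProductSpace InnerProductSpace

/-- The Bessel function of the first kind of integer order `n`, via the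
integral representation `J_n(t) = (1/(2π)) ∫_{−π}^{π} exp(i(t sin φ − n φ)) dφ`. -/
noncomputable def besselJ (n : ℤ) (t : ℝ) : ℂ :=
  (1 / (2 * Real.pi)) *
    ∫ φ in (-Real.pi)..Real.pi,
      Complex.exp (Complex.I * ((t : ℂ) * (Real.sin φ : ℂ) - (n : ℂ) * (φ : ℂ)))

/-- The unit direction vector `d(φ) = (cos φ, sin φ)` in the Euclidean plane. -/
noncomputable def dir (φ : ℝ) : EuclideanSpace ℝ (Fin 2) :=
  (WithLp.equiv 2 (Fin 2 → ℝ)).symm ![Real.cos φ, Real.sin φ]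

/-- First-order partial derivative in the `i`-th coordinate direction. -/
noncomputable def pd (i : Fin 2) (f : EuclideanSpace ℝ (Fin 2) → ℂ) :
    EuclideanSpace ℝ (Fin 2) → ℂ :=
  fun x => fderiv ℝ f x (EuclideanSpace.single i 1)

/-!
Writing `J₀(k|x|) = (1/2π) ∫ exp(i k ⟨x, d(φ)⟩) dφ` as a Herglotz wave function, each partial
derivative multiplies the density by `i k dᵢ(φ)`, so every `∂₁ˢ ∂₂ᵗ J₀(k|x - z|)` is a Herglotz
wave function with a smooth periodic density. In polar coordinates its phase is
`k |x| cos ψ`, and a van der Corput argument (trivial bound near the stationary points `0, π`,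
integration by parts away from them) bounds it by `C / √(k |x|)`. Squaring and integrating over
`D`, where `|x - z| ≥ dist(z, D)`, gives the `1 / dist(z, D)` decay.
-/

local notation "ℝ²" => EuclideanSpace ℝ (Fin 2)

lemma dir_apply_zero (φ : ℝ) : dir φ 0 = Real.cos φ := rfl

lemma dir_apply_one (φ : ℝ) : dir φ 1 = Real.sin φ := rfl

lemma inner_dir (φ : ℝ) (x : ℝ²) : ⟪dir φ, x⟫ = Real.cos φ * x 0 + Real.sin φ * x 1 := by
  simp [PiLp.inner_apply, Fin.sum_univ_two, dir_apply_zero, dir_apply_one, mul_comm]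

lemma norm_dir (φ : ℝ) : ‖dir φ‖ = 1 := by
  rw [EuclideanSpace.norm_eq, Fin.sum_univ_two, dir_apply_zero, dir_apply_one]
  simp

@[fun_prop]
lemma continuous_dir : Continuous dir :=
  (PiLp.continuous_toLp 2 _).comp (by fun_prop)

lemma exists_inner_dir_eq_norm_mul_cos (x : ℝ²) :
    ∃ θ, ∀ φ, ⟪dir φ, x⟫ = ‖x‖ * Real.cos (φ - θ) := by
  set w := orthonormalBasisOneI.repr.symm x
  have hx : x = orthonormalBasisOneI.repr w := (orthonormalBasisOneI.repr.apply_symm_apply x).symm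
  have hw : ‖w‖ = ‖x‖ := orthonormalBasisOneI.repr.symm.norm_map x
  refine ⟨arg w, fun φ => ?_⟩
  have h0 : x 0 = ‖x‖ * Real.cos (arg w) := by
    rw [← hw, norm_mul_cos_arg, hx]; simp [orthonormalBasisOneI_repr_apply]
  have h1 : x 1 = ‖x‖ * Real.sin (arg w) := by
    rw [← hw, norm_mul_sin_arg, hx]; simp [orthonormalBasisOneI_repr_apply]
  rw [inner_dir, h0, h1, Real.cos_sub]
  ring

lemma pd_comp_sub (i : Fin 2) (f : ℝ² → ℂ) (z : ℝ²) :
    pd i (fun y => f (y - z)) = fun y => pd i f (y - z) := by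
  ext y
  simp only [pd, fderiv_comp_sub]

lemma iterate_pd_comp_sub (i : Fin 2) (n : ℕ) (f : ℝ² → ℂ) (z : ℝ²) :
    (pd i)^[n] (fun y => f (y - z)) = fun y => (pd i)^[n] f (y - z) := by
  induction n generalizing f with
  | zero => rfl
  | succ n ih => simp only [Function.iterate_succ_apply, pd_comp_sub, ih]

noncomputable def herglotz (k : ℝ) (c : ℝ → ℂ) (x : ℝ²) : ℂ :=
  1 / (2 * π) * ∫ φ in -π..π, c φ * exp (↑(k * ⟪dir φ, x⟫) * I)

lemma integral_mul_exp_cos_sub {c : ℝ → ℂ} (hc : Function.Periodic c (2 * π)) (t θ : ℝ) :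
    ∫ φ in -π..π, c φ * exp (↑(t * Real.cos (φ - θ)) * I) =
      ∫ ψ in -π..π, c (ψ + θ) * exp (↑(t * Real.cos ψ) * I) := by
  set g : ℝ → ℂ := fun ψ => c (ψ + θ) * exp (↑(t * Real.cos ψ) * I)
  have hg : Function.Periodic g (2 * π) := fun ψ => by
    simp only [g, add_right_comm ψ, hc (ψ + θ), Real.cos_add_two_pi]
  calc ∫ φ in -π..π, c φ * exp (↑(t * Real.cos (φ - θ)) * I)
      = ∫ φ in -π..π, g (φ - θ) := by simp only [g, sub_add_cancel]
    _ = ∫ ψ in -π - θ..-π - θ + 2 * π, g ψ := by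
      rw [intervalIntegral.integral_comp_sub_right]; ring_nf
    _ = ∫ ψ in -π..π, g ψ := by
      rw [hg.intervalIntegral_add_eq (-π - θ) (-π)]; ring_nf

lemma besselJ_zero_eq_integral_cos (t : ℝ) :
    besselJ 0 t = 1 / (2 * π) * ∫ ψ in -π..π, exp (↑(t * Real.cos ψ) * I) := by
  have h := integral_mul_exp_cos_sub (c := fun _ => 1) (fun _ => rfl) t (π / 2)
  simp only [one_mul, Real.cos_sub_pi_div_two] at h
  rw [besselJ, ← h]
  congr 2; ext φ; congr 1; push_cast; ring

lemma herglotz_eq_integral_cos (k : ℝ) {c : ℝ → ℂ} (hc : Function.Periodic c (2 * π))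
    (x : ℝ²) : ∃ θ, herglotz k c x =
      1 / (2 * π) * ∫ ψ in -π..π, c (ψ + θ) * exp (↑(k * ‖x‖ * Real.cos ψ) * I) := by
  obtain ⟨θ, hθ⟩ := exists_inner_dir_eq_norm_mul_cos x
  refine ⟨θ, ?_⟩
  rw [herglotz, ← integral_mul_exp_cos_sub hc]
  simp only [hθ, mul_assoc]

lemma besselJ_zero_eq_herglotz (k : ℝ) :
    (fun x => besselJ 0 (k * ‖x‖)) = herglotz k (fun _ => 1) := by
  ext x
  obtain ⟨θ, hθ⟩ := herglotz_eq_integral_cos k (c := fun _ => 1) (fun _ => rfl) x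
  simp [hθ, besselJ_zero_eq_integral_cos]

section Derivative

variable (k : ℝ) {c : ℝ → ℂ}

lemma hasFDerivAt_mul_exp_inner_dir (a : ℂ) (φ : ℝ) (x : ℝ²) :
    HasFDerivAt (fun y => a * exp (↑(k * ⟪dir φ, y⟫) * I))
      ((a * exp (↑(k * ⟪dir φ, x⟫) * I)) • (innerSL ℝ (dir φ)).smulRight ((k : ℂ) * I)) x := by
  have hL : ∀ y, ((innerSL ℝ (dir φ)).smulRight ((k : ℂ) * I)) y = ↑(k * ⟪dir φ, y⟫) * I := by
    intro y; simp; ring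
  simp only [← hL, ← smul_smul]
  exact (((innerSL ℝ (dir φ)).smulRight ((k : ℂ) * I)).hasFDerivAt.cexp).const_mul a

lemma continuous_mul_exp_inner_dir (hc : Continuous c) (x : ℝ²) :
    Continuous fun φ => c φ * exp (↑(k * ⟪dir φ, x⟫) * I) :=
  hc.mul (by fun_prop)

lemma continuous_smulRight_innerSL_dir :
    Continuous fun φ => (innerSL ℝ (dir φ)).smulRight ((k : ℂ) * I) :=
  (ContinuousLinearMap.smulRightL ℝ ℝ² ℂ).continuous₂.comp₂
    ((innerSL ℝ).continuous.comp continuous_dir) continuous_const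

lemma hasFDerivAt_herglotz (hc : Continuous c) (x : ℝ²) :
    HasFDerivAt (herglotz k c)
      ((1 / (2 * π) : ℂ) • ∫ φ in -π..π,
        (c φ * exp (↑(k * ⟪dir φ, x⟫) * I)) • (innerSL ℝ (dir φ)).smulRight ((k : ℂ) * I)) x := by
  refine HasFDerivAt.const_mul ?_ _
  refine intervalIntegral.hasFDerivAt_integral_of_dominated_of_fderiv_le
    (F' := fun y φ => (c φ * exp (↑(k * ⟪dir φ, y⟫) * I)) •
      (innerSL ℝ (dir φ)).smulRight ((k : ℂ) * I))
    (bound := fun φ => |k| * ‖c φ‖) Filter.univ_mem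
    (.of_forall fun y => (continuous_mul_exp_inner_dir k hc y).aestronglyMeasurable)
    ((continuous_mul_exp_inner_dir k hc x).intervalIntegrable _ _)
    ((continuous_mul_exp_inner_dir k hc x).smul
      (continuous_smulRight_innerSL_dir k)).aestronglyMeasurable
    (.of_forall fun φ _ y _ => ?_)
    ((by fun_prop : Continuous fun φ => |k| * ‖c φ‖).intervalIntegrable _ _)
    (.of_forall fun φ _ y _ => hasFDerivAt_mul_exp_inner_dir k _ φ y)
  rw [norm_smul, norm_mul, norm_exp_ofReal_mul_I, mul_one, ContinuousLinearMap.norm_smulRight_apply]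
  simp [norm_dir, mul_comm]

lemma pd_herglotz (hc : Continuous c) (i : Fin 2) :
    pd i (herglotz k c) = herglotz k (fun φ => k * dir φ i * I * c φ) := by
  ext x
  rw [pd, (hasFDerivAt_herglotz k hc x).fderiv, smul_apply,
    ContinuousLinearMap.intervalIntegral_apply]
  · simp only [herglotz, smul_eq_mul]
    congr 1
    refine intervalIntegral.integral_congr fun φ _ => ?_
    simp [EuclideanSpace.inner_single_right]
    ring
  · exact ((continuous_mul_exp_inner_dir k hc x).smul
      (continuous_smulRight_innerSL_dir k)).intervalIntegrable _ _

lemma iterate_pd_herglotz (hc : Continuous c) (i : Fin 2) (n : ℕ) :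
    (pd i)^[n] (herglotz k c) = herglotz k (fun φ => (k * dir φ i * I) ^ n * c φ) := by
  induction n generalizing c with
  | zero => simp
  | succ n ih =>
    rw [Function.iterate_succ_apply, pd_herglotz k hc, ih (by fun_prop)]
    simp only [pow_succ, mul_assoc]

end Derivative

lemma iterate_pd_besselJ_zero (k : ℝ) (z : ℝ²) (s t : ℕ) :
    (pd 0)^[s] ((pd 1)^[t] (fun y => besselJ 0 (k * ‖y - z‖))) = fun y =>
      herglotz k (fun φ => (k * Real.cos φ * I) ^ s * (k * Real.sin φ * I) ^ t) (y - z) := by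
  rw [iterate_pd_comp_sub 1 t (fun x => besselJ 0 (k * ‖x‖)), iterate_pd_comp_sub,
    besselJ_zero_eq_herglotz, iterate_pd_herglotz k continuous_const,
    iterate_pd_herglotz k (by fun_prop)]
  simp [dir_apply_zero, dir_apply_one]

section OscillatoryIntegral

open Set

lemma sin_pos_of_mem_uIcc {δ ψ : ℝ} (hδ : 0 < δ) (hδπ : δ < π) (hψ : ψ ∈ uIcc δ (π - δ)) :
    0 < Real.sin ψ := by
  apply Real.sin_pos_of_pos_of_lt_pi
  · exact lt_of_lt_of_le (lt_min hδ (by linarith)) hψ.1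
  · exact lt_of_le_of_lt hψ.2 (max_lt (by linarith) (by linarith))

lemma integral_inv_sin_sq {δ : ℝ} (hδ : 0 < δ) (hδπ : δ < π) :
    ∫ ψ in δ..π - δ, (Real.sin ψ ^ 2)⁻¹ = 2 * Real.cos δ / Real.sin δ := by
  have hderiv : ∀ ψ ∈ uIcc δ (π - δ),
      HasDerivAt (fun x => -Real.cos x / Real.sin x) ((Real.sin ψ ^ 2)⁻¹) ψ := by
    intro ψ hψ
    have hs := (sin_pos_of_mem_uIcc hδ hδπ hψ).ne'
    refine ((Real.hasDerivAt_cos ψ).neg.div (Real.hasDerivAt_sin ψ) hs).congr_deriv ?_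
    rw [inv_eq_one_div, Pi.neg_apply]
    congr 1
    linear_combination Real.sin_sq_add_cos_sq ψ
  have hcont : ContinuousOn (fun ψ => (Real.sin ψ ^ 2)⁻¹) (uIcc δ (π - δ)) :=
    (Real.continuous_sin.pow 2).continuousOn.inv₀ fun ψ hψ =>
      (pow_pos (sin_pos_of_mem_uIcc hδ hδπ hψ) 2).ne'
  rw [intervalIntegral.integral_eq_sub_of_hasDerivAt hderiv hcont.intervalIntegrable,
    Real.sin_pi_sub, Real.cos_pi_sub]
  ring

lemma norm_integral_le_of_norm_le_inv_sin_sq {f : ℝ → ℂ} {A δ : ℝ} (hδ : 0 < δ) (hδπ : δ ≤ π / 2)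
    (hf : ∀ ψ ∈ Icc δ (π - δ), ‖f ψ‖ ≤ A * (Real.sin ψ ^ 2)⁻¹) :
    ‖∫ ψ in δ..π - δ, f ψ‖ ≤ 2 * A / Real.sin δ := by
  have hδπ' : δ ≤ π - δ := by linarith
  have hsδ : 0 < Real.sin δ := sin_pos_of_mem_uIcc hδ (by linarith [pi_pos]) left_mem_uIcc
  have hA : 0 ≤ A := nonneg_of_mul_nonneg_left ((norm_nonneg _).trans (hf δ ⟨le_rfl, hδπ'⟩))
    (by positivity)
  have hcont : ContinuousOn (fun ψ => A * (Real.sin ψ ^ 2)⁻¹) (uIcc δ (π - δ)) :=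
    continuousOn_const.mul <| (Real.continuous_sin.pow 2).continuousOn.inv₀ fun ψ hψ =>
      (pow_pos (sin_pos_of_mem_uIcc hδ (by linarith [pi_pos]) hψ) 2).ne'
  calc ‖∫ ψ in δ..π - δ, f ψ‖ ≤ ∫ ψ in δ..π - δ, A * (Real.sin ψ ^ 2)⁻¹ :=
        intervalIntegral.norm_integral_le_of_norm_le hδπ'
          (.of_forall fun ψ hψ => hf ψ (Ioc_subset_Icc_self hψ)) hcont.intervalIntegrable
    _ = A * (2 * Real.cos δ / Real.sin δ) := by
        rw [intervalIntegral.integral_const_mul, integral_inv_sin_sq hδ (by linarith [pi_pos])]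
    _ ≤ 2 * A / Real.sin δ := by
        rw [← mul_div_assoc, div_le_div_iff_of_pos_right hsδ]
        nlinarith [Real.cos_le_one δ]

lemma hasDerivAt_exp_mul_cos (T ψ : ℝ) :
    HasDerivAt (fun ψ => exp (↑(T * Real.cos ψ) * I))
      (exp (↑(T * Real.cos ψ) * I) * (↑(-(T * Real.sin ψ)) * I)) ψ := by
  simpa using ((((Real.hasDerivAt_cos ψ).const_mul T).ofReal_comp).mul_const I).cexp

lemma integral_mul_exp_cos_eq_sub {b : ℝ → ℂ} {T a c : ℝ} (hb : ContDiff ℝ 1 b)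
    (hsin : ∀ ψ ∈ uIcc a c, T * Real.sin ψ ≠ 0) :
    ∫ ψ in a..c, b ψ * exp (↑(T * Real.cos ψ) * I) =
      b c * ↑(T * Real.sin c)⁻¹ * I * exp (↑(T * Real.cos c) * I) -
        b a * ↑(T * Real.sin a)⁻¹ * I * exp (↑(T * Real.cos a) * I) -
        ∫ ψ in a..c, (deriv b ψ * ↑(T * Real.sin ψ)⁻¹ +
          b ψ * ↑(-(T * Real.cos ψ) / (T * Real.sin ψ) ^ 2)) * I * exp (↑(T * Real.cos ψ) * I) := by
  have hu : ∀ ψ ∈ uIcc a c, HasDerivAt (fun ψ => b ψ * ↑(T * Real.sin ψ)⁻¹ * I)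
      ((deriv b ψ * ↑(T * Real.sin ψ)⁻¹ +
        b ψ * ↑(-(T * Real.cos ψ) / (T * Real.sin ψ) ^ 2)) * I) ψ := fun ψ hψ =>
    ((hb.differentiable one_ne_zero ψ).hasDerivAt.mul
      (((Real.hasDerivAt_sin ψ).const_mul T).inv (hsin ψ hψ)).ofReal_comp).mul_const I
  have hu' : ContinuousOn (fun ψ => (deriv b ψ * ↑(T * Real.sin ψ)⁻¹ +
      b ψ * ↑(-(T * Real.cos ψ) / (T * Real.sin ψ) ^ 2)) * I) (uIcc a c) := by
    have hg : ContinuousOn (fun ψ => (T * Real.sin ψ)⁻¹) (uIcc a c) :=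
      (by fun_prop : Continuous fun ψ => T * Real.sin ψ).continuousOn.inv₀ hsin
    have hg' : ContinuousOn (fun ψ => -(T * Real.cos ψ) / (T * Real.sin ψ) ^ 2) (uIcc a c) :=
      (by fun_prop : Continuous fun ψ => -(T * Real.cos ψ)).continuousOn.div (by fun_prop)
        fun ψ hψ => pow_ne_zero 2 (hsin ψ hψ)
    have := hb.continuous_deriv le_rfl
    have := hb.continuous
    fun_prop
  rw [← intervalIntegral.integral_mul_deriv_eq_deriv_mul hu
    (fun ψ _ => hasDerivAt_exp_mul_cos T ψ) hu'.intervalIntegrable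
    ((by fun_prop : Continuous fun ψ => exp (↑(T * Real.cos ψ) * I) *
      (↑(-(T * Real.sin ψ)) * I)).intervalIntegrable _ _)]
  refine intervalIntegral.integral_congr fun ψ hψ => ?_
  have hgT : (T * Real.sin ψ)⁻¹ * (T * Real.sin ψ) = 1 := inv_mul_cancel₀ (hsin ψ hψ)
  calc b ψ * exp (↑(T * Real.cos ψ) * I)
      = b ψ * exp (↑(T * Real.cos ψ) * I) * ↑((T * Real.sin ψ)⁻¹ * (T * Real.sin ψ)) *
          -(I * I) := by
        rw [hgT, ofReal_one, mul_one, I_mul_I, neg_neg, mul_one]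
    _ = _ := by push_cast; ring

lemma norm_inv_mul_sin_le {T ψ : ℝ} (hT : 0 < T) (hs : Real.sin ψ ≠ 0) :
    ‖(T * Real.sin ψ)⁻¹‖ ≤ (T * Real.sin ψ ^ 2)⁻¹ := by
  rw [norm_inv, norm_mul, Real.norm_of_nonneg hT.le, Real.norm_eq_abs, ← sq_abs]
  exact inv_anti₀ (by positivity) (mul_le_mul_of_nonneg_left
    (by nlinarith [Real.abs_sin_le_one ψ, abs_pos.2 hs]) hT.le)

lemma norm_neg_mul_cos_div_sq_le {T ψ : ℝ} (hT : 0 < T) (hs : Real.sin ψ ≠ 0) :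
    ‖-(T * Real.cos ψ) / (T * Real.sin ψ) ^ 2‖ ≤ (T * Real.sin ψ ^ 2)⁻¹ := by
  rw [norm_div, norm_neg, norm_pow, norm_mul, norm_mul, Real.norm_of_nonneg hT.le,
    Real.norm_eq_abs, Real.norm_eq_abs]
  calc T * |Real.cos ψ| / (T * |Real.sin ψ|) ^ 2 ≤ T * 1 / (T * |Real.sin ψ|) ^ 2 := by
        gcongr; exact Real.abs_cos_le_one ψ
    _ = (T * Real.sin ψ ^ 2)⁻¹ := by rw [mul_pow, sq_abs]; field_simp

lemma norm_integral_mul_exp_cos_le_of_sin {b : ℝ → ℂ} {M T δ : ℝ} (hb : ContDiff ℝ 1 b)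
    (hM : ∀ x, ‖b x‖ ≤ M) (hM' : ∀ x, ‖deriv b x‖ ≤ M) (hT : 0 < T) (hδ : 0 < δ)
    (hδπ : δ ≤ π / 2) :
    ‖∫ ψ in δ..π - δ, b ψ * exp (↑(T * Real.cos ψ) * I)‖ ≤ 6 * M / (T * Real.sin δ) := by
  have hsin : ∀ ψ ∈ uIcc δ (π - δ), 0 < Real.sin ψ := fun ψ =>
    sin_pos_of_mem_uIcc hδ (by linarith [pi_pos])
  have hsδ : 0 < Real.sin δ := hsin δ left_mem_uIcc
  have hM0 : 0 ≤ M := (norm_nonneg _).trans (hM 0)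
  have hboundary : ∀ ψ, Real.sin ψ = Real.sin δ →
      ‖b ψ * ↑(T * Real.sin ψ)⁻¹ * I * exp (↑(T * Real.cos ψ) * I)‖ ≤ M / (T * Real.sin δ) := by
    intro ψ hψ
    rw [norm_mul, norm_exp_ofReal_mul_I, norm_mul, norm_I, norm_mul, norm_real, hψ,
      Real.norm_of_nonneg (by positivity), mul_one, mul_one, div_eq_mul_inv]
    exact mul_le_mul_of_nonneg_right (hM ψ) (by positivity)
  have hderiv : ∀ ψ ∈ Icc δ (π - δ), ‖(deriv b ψ * ↑(T * Real.sin ψ)⁻¹ +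
      b ψ * ↑(-(T * Real.cos ψ) / (T * Real.sin ψ) ^ 2)) * I * exp (↑(T * Real.cos ψ) * I)‖ ≤
        2 * M / T * (Real.sin ψ ^ 2)⁻¹ := by
    intro ψ hψ
    have hs := (hsin ψ (Icc_subset_uIcc hψ)).ne'
    rw [norm_mul, norm_exp_ofReal_mul_I, norm_mul, norm_I, mul_one, mul_one]
    calc _ ≤ M * (T * Real.sin ψ ^ 2)⁻¹ + M * (T * Real.sin ψ ^ 2)⁻¹ := by
          refine (norm_add_le _ _).trans (add_le_add ?_ ?_) <;> rw [norm_mul, norm_real]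
          · exact mul_le_mul (hM' ψ) (norm_inv_mul_sin_le hT hs) (norm_nonneg _) hM0
          · exact mul_le_mul (hM ψ) (norm_neg_mul_cos_div_sq_le hT hs) (norm_nonneg _) hM0
      _ = 2 * M / T * (Real.sin ψ ^ 2)⁻¹ := by field_simp; ring
  rw [integral_mul_exp_cos_eq_sub hb fun ψ hψ => (mul_pos hT (hsin ψ hψ)).ne']
  calc _ ≤ M / (T * Real.sin δ) + M / (T * Real.sin δ) + 2 * (2 * M / T) / Real.sin δ :=
        (norm_sub_le _ _).trans (add_le_add ((norm_sub_le _ _).trans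
          (add_le_add (hboundary _ (Real.sin_pi_sub δ)) (hboundary _ rfl)))
          (norm_integral_le_of_norm_le_inv_sin_sq hδ hδπ hderiv))
    _ = 6 * M / (T * Real.sin δ) := by field_simp; ring

lemma norm_integral_zero_pi_mul_exp_cos_le {b : ℝ → ℂ} {M T : ℝ} (hb : ContDiff ℝ 1 b)
    (hM : ∀ x, ‖b x‖ ≤ M) (hM' : ∀ x, ‖deriv b x‖ ≤ M) (hT : 1 ≤ T) :
    ‖∫ ψ in 0..π, b ψ * exp (↑(T * Real.cos ψ) * I)‖ ≤ 12 * M / √T := by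
  set f : ℝ → ℂ := fun ψ => b ψ * exp (↑(T * Real.cos ψ) * I)
  have hf : ∀ a c, IntervalIntegrable f volume a c := fun a c =>
    (hb.continuous.mul (by fun_prop)).intervalIntegrable a c
  have hf_le : ∀ a c, a ≤ c → ‖∫ ψ in a..c, f ψ‖ ≤ M * (c - a) := fun a c hac => by
    simpa [abs_of_nonneg (sub_nonneg.2 hac)] using
      intervalIntegral.norm_integral_le_of_norm_le_const (a := a) (b := c) fun ψ _ => by
        rw [norm_mul, norm_exp_ofReal_mul_I, mul_one]; exact hM ψ
  have hS : 1 ≤ √T := Real.one_le_sqrt.2 hT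
  -- `δ = T^(-1/2)` balances the trivial bound `M δ` on the pieces next to the stationary points
  -- `0` and `π` against the integration-by-parts bound `≈ M / (T δ)` on the middle piece.
  set δ := (√T)⁻¹
  have hδ : 0 < δ := by positivity
  have hδπ : δ ≤ π / 2 := by
    have : δ ≤ 1 := inv_le_one_of_one_le₀ hS
    linarith [pi_gt_three]
  have hTδ : T * δ = √T := by
    rw [← div_eq_mul_inv, Real.div_sqrt]
  have hsin : 2 / π * √T ≤ T * Real.sin δ := by
    rw [← hTδ, mul_left_comm]
    exact mul_le_mul_of_nonneg_left (Real.mul_le_sin hδ.le hδπ) (by linarith)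
  have hM0 : 0 ≤ M := (norm_nonneg _).trans (hM 0)
  have hmid : 6 * M / (T * Real.sin δ) ≤ 3 * π * M * δ :=
    calc 6 * M / (T * Real.sin δ) ≤ 6 * M / (2 / π * √T) :=
          div_le_div_of_nonneg_left (by positivity) (by positivity) hsin
      _ = 3 * π * M * δ := by simp only [δ]; field_simp; ring
  rw [← intervalIntegral.integral_add_adjacent_intervals (hf 0 δ) (hf δ π),
    ← intervalIntegral.integral_add_adjacent_intervals (hf δ (π - δ)) (hf (π - δ) π)]
  calc _ ≤ M * (δ - 0) + (6 * M / (T * Real.sin δ) + M * (π - (π - δ))) :=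
        (norm_add_le _ _).trans (add_le_add (hf_le 0 δ hδ.le) ((norm_add_le _ _).trans
          (add_le_add (norm_integral_mul_exp_cos_le_of_sin hb hM hM' (by linarith) hδ hδπ)
            (hf_le _ _ (by linarith)))))
    _ ≤ M * δ + (3 * π * M * δ + M * δ) := by rw [sub_zero, sub_sub_cancel]; gcongr
    _ ≤ 12 * M * δ := by nlinarith [pi_lt_d2, mul_nonneg hM0 hδ.le]
    _ = 12 * M / √T := (div_eq_mul_inv _ _).symm

lemma norm_integral_mul_exp_cos_le {b : ℝ → ℂ} {M T : ℝ} (hb : ContDiff ℝ 1 b)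
    (hM : ∀ x, ‖b x‖ ≤ M) (hM' : ∀ x, ‖deriv b x‖ ≤ M) (hT : 1 ≤ T) :
    ‖∫ ψ in -π..π, b ψ * exp (↑(T * Real.cos ψ) * I)‖ ≤ 24 * M / √T := by
  have hf : ∀ a c, IntervalIntegrable (fun ψ => b ψ * exp (↑(T * Real.cos ψ) * I)) volume a c :=
    fun a c => (hb.continuous.mul (by fun_prop)).intervalIntegrable a c
  have hneg : ∫ ψ in -π..0, b ψ * exp (↑(T * Real.cos ψ) * I) =
      ∫ ψ in 0..π, b (-ψ) * exp (↑(T * Real.cos ψ) * I) := by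
    simpa using (intervalIntegral.integral_comp_neg
      (a := 0) (b := π) fun ψ => b ψ * exp (↑(T * Real.cos ψ) * I)).symm
  rw [← intervalIntegral.integral_add_adjacent_intervals (hf (-π) 0) (hf 0 π), hneg]
  refine (norm_add_le _ _).trans ?_
  have h1 := norm_integral_zero_pi_mul_exp_cos_le (b := fun ψ => b (-ψ)) (hb.comp contDiff_neg)
    (fun ψ => hM (-ψ)) (fun ψ => by simpa [deriv_comp_neg] using hM' (-ψ)) hT
  have h2 := norm_integral_zero_pi_mul_exp_cos_le hb hM hM' hT
  calc _ ≤ 12 * M / √T + 12 * M / √T := add_le_add h1 h2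
    _ = 24 * M / √T := by ring

end OscillatoryIntegral

lemma Function.Periodic.exists_norm_le {E : Type*} [SeminormedAddGroup E] {f : ℝ → E} {p : ℝ}
    (hf : Function.Periodic f p) (hp : p ≠ 0) (hfc : Continuous f) : ∃ M, ∀ x, ‖f x‖ ≤ M := by
  obtain ⟨M, hM⟩ := isBounded_iff_forall_norm_le.1 (hf.isBounded_of_continuous hp hfc)
  exact ⟨M, fun x => hM _ ⟨x, rfl⟩⟩

lemma exists_norm_herglotz_le (k : ℝ) {c : ℝ → ℂ} (hc : ContDiff ℝ 1 c)
    (hper : Function.Periodic c (2 * π)) :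
    ∃ C, ∀ x, 1 ≤ k * ‖x‖ → ‖herglotz k c x‖ ≤ C / √(k * ‖x‖) := by
  have hper' : Function.Periodic (deriv c) (2 * π) := fun x => by
    rw [← deriv_comp_add_const, hper.funext]
  obtain ⟨M₀, hM₀⟩ := hper.exists_norm_le two_pi_pos.ne' hc.continuous
  obtain ⟨M₁, hM₁⟩ := hper'.exists_norm_le two_pi_pos.ne' (hc.continuous_deriv le_rfl)
  refine ⟨(2 * π)⁻¹ * (24 * max M₀ M₁), fun x hx => ?_⟩
  obtain ⟨θ, hθ⟩ := herglotz_eq_integral_cos k hper x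
  have hb := norm_integral_mul_exp_cos_le (b := fun ψ => c (ψ + θ)) (M := max M₀ M₁)
    (hc.comp (contDiff_id.add contDiff_const))
    (fun ψ => (hM₀ _).trans (le_max_left _ _))
    (fun ψ => by rw [deriv_comp_add_const]; exact (hM₁ _).trans (le_max_right _ _)) hx
  rw [hθ, norm_mul, mul_div_assoc]
  gcongr
  simp [abs_of_pos pi_pos]

lemma setIntegral_norm_sq_comp_sub_le {E G : Type*} [NormedAddCommGroup E] [MeasurableSpace E]
    [NormedAddCommGroup G] {μ : Measure E} {F : E → G} {C k : ℝ} (hk : 0 < k)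
    (hF : ∀ x, 1 ≤ k * ‖x‖ → ‖F x‖ ≤ C / √(k * ‖x‖)) {D : Set E} (hD : μ D < ⊤) {z : E}
    (hz : k⁻¹ ≤ Metric.infDist z D) :
    ∫ x in D, ‖F (x - z)‖ ^ 2 ∂μ ≤ C ^ 2 * μ.real D / k / Metric.infDist z D := by
  set d := Metric.infDist z D
  have hd : 0 < d := (inv_pos.2 hk).trans_le hz
  have hkd : 1 ≤ k * d := by rwa [← inv_mul_le_iff₀ hk, mul_one]
  have hpt : ∀ x ∈ D, ‖‖F (x - z)‖ ^ 2‖ ≤ C ^ 2 / (k * d) := by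
    intro x hx
    have hdx : d ≤ ‖x - z‖ := by
      simpa [dist_eq_norm, norm_sub_rev] using Metric.infDist_le_dist_of_mem (x := z) hx
    have hkx : k * d ≤ k * ‖x - z‖ := mul_le_mul_of_nonneg_left hdx hk.le
    calc ‖‖F (x - z)‖ ^ 2‖ = ‖F (x - z)‖ ^ 2 := by simp
      _ ≤ (C / √(k * ‖x - z‖)) ^ 2 := by gcongr; exact hF _ (hkd.trans hkx)
      _ = C ^ 2 / (k * ‖x - z‖) := by rw [div_pow, Real.sq_sqrt (by linarith)]
      _ ≤ C ^ 2 / (k * d) := by gcongr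
  calc ∫ x in D, ‖F (x - z)‖ ^ 2 ∂μ ≤ ‖∫ x in D, ‖F (x - z)‖ ^ 2 ∂μ‖ := le_abs_self _
    _ ≤ C ^ 2 / (k * d) * μ.real D := norm_setIntegral_le_of_norm_le_const hD hpt
    _ = C ^ 2 * μ.real D / k / d := by field_simp

theorem besselJ_Hq_decay_general (k : ℝ) (hk : 0 < k) (q : ℕ)
    (D : Set (EuclideanSpace ℝ (Fin 2)))
    (hDb : Bornology.IsBounded D) :
    ∃ C > (0:ℝ), ∃ R > (0:ℝ), ∀ z : EuclideanSpace ℝ (Fin 2),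
      R ≤ Metric.infDist z D →
        (∑ p ∈ (Finset.range (q + 1) ×ˢ Finset.range (q + 1)).filter
              (fun p => p.1 + p.2 ≤ q),
            ∫ x in D,
              ‖(pd 0)^[p.1] ((pd 1)^[p.2] (fun y => besselJ 0 (k * ‖y - z‖))) x‖ ^ 2) ≤
          C / Metric.infDist z D := by
  have hcos : ContDiff ℝ 1 fun φ : ℝ => (Real.cos φ : ℂ) := ofRealCLM.contDiff.comp contDiff_cos
  have hsin : ContDiff ℝ 1 fun φ : ℝ => (Real.sin φ : ℂ) := ofRealCLM.contDiff.comp contDiff_sin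
  have hdecay : ∀ p : ℕ × ℕ, ∃ C, ∀ x, 1 ≤ k * ‖x‖ →
      ‖herglotz k (fun φ => (k * Real.cos φ * I) ^ p.1 * (k * Real.sin φ * I) ^ p.2) x‖ ≤
        C / √(k * ‖x‖) := fun p =>
    exists_norm_herglotz_le k (by fun_prop)
      fun φ => by simp only [Real.cos_add_two_pi, Real.sin_add_two_pi]
  choose C hC using hdecay
  set S := (Finset.range (q + 1) ×ˢ Finset.range (q + 1)).filter (fun p => p.1 + p.2 ≤ q)
  refine ⟨∑ p ∈ S, C p ^ 2 * volume.real D / k + 1, by positivity, k⁻¹, inv_pos.2 hk,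
    fun z hz => ?_⟩
  have hd : 0 < Metric.infDist z D := (inv_pos.2 hk).trans_le hz
  simp_rw [iterate_pd_besselJ_zero]
  calc _ ≤ ∑ p ∈ S, C p ^ 2 * volume.real D / k / Metric.infDist z D :=
        Finset.sum_le_sum fun p _ =>
          setIntegral_norm_sq_comp_sub_le hk (hC p) hDb.measure_lt_top hz
    _ ≤ _ := by
        rw [← Finset.sum_div]
        gcongr
        linarith

/-- For `k > 0`, any `q ∈ ℕ`, and a bounded measurable set `D ⊂ ℝ²`, the squared
`H^q(D)`-norm of `x ↦ J₀(k|x−z|)` decays like `1/dist(z,D)`: there are `C > 0` and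
`R > 0` such that for every `z` with `dist(z, D) ≥ R`,
`Σ_{s+t ≤ q} ∫_D |∂₁^s ∂₂^t J₀(k|x−z|)|² dx ≤ C / dist(z, D)`. -/
theorem besselJ_Hq_decay (k : ℝ) (hk : 0 < k) (q : ℕ)
    (D : Set (EuclideanSpace ℝ (Fin 2)))
    (hDb : Bornology.IsBounded D) (hDm : MeasurableSet D) :
    ∃ C > (0:ℝ), ∃ R > (0:ℝ), ∀ z : EuclideanSpace ℝ (Fin 2),
      R ≤ Metric.infDist z D →
        (∑ p ∈ (Finset.range (q + 1) ×ˢ Finset.range (q + 1)).filter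
              (fun p => p.1 + p.2 ≤ q),
            ∫ x in D,
              ‖(pd 0)^[p.1] ((pd 1)^[p.2] (fun y => besselJ 0 (k * ‖y - z‖))) x‖ ^ 2) ≤
          C / Metric.infDist z D :=
  besselJ_Hq_decay_general k hk q D hDb
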